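/- arXiv:2306.05400 — 2 statements merged into one kernel-verified Lean document; each statement's English description precedes it below -/
import Mathlib

section
/- Let m, ℓ ∈ ℕ, let d : ({-1,0,1}^m) → ℝ, and define f(θ) = Σ_ω d_ω Φ_ω(θ) (sum over all frequency vectors ω ∈ {-1,0,1}^m) and its truncation g(θ) = Σ_{|ω| ≤ ℓ} d_ω Φ_ω(θ). Then Δ(f,g)² = Σ_{|ω| > ℓ} 2^{-|ω|} d_ω². -/
open MeasureTheory Finset

/-- The trigonometric monomial factor: `φ₀ = 1`, `φ₁ = cos`, `φ₋₁ = sin`. -/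
noncomputable def phi (w : ℤ) (x : ℝ) : ℝ :=
  if w = 1 then Real.cos x else if w = -1 then Real.sin x else 1

/-- The multivariate trigonometric monomial `Φ_ω(θ) = ∏ i, φ_{ω i}(θ i)`. -/
noncomputable def Phi {m : ℕ} (ω : Fin m → ℤ) (θ : Fin m → ℝ) : ℝ :=
  ∏ i, phi (ω i) (θ i)

/-- The weight `|ω|` of a frequency vector: the number of nonzero entries. -/
def wt {m : ℕ} (ω : Fin m → ℤ) : ℕ := (Finset.univ.filter fun i => ω i ≠ 0).card

/-- The finite set of all frequency vectors `ω ∈ {-1,0,1}^m`. -/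
def freqSet (m : ℕ) : Finset (Fin m → ℤ) :=
  Fintype.piFinset fun _ => ({-1, 0, 1} : Finset ℤ)

/-- The mean of a function over the cube `[0, 2π]^m`. -/
noncomputable def cubeMean (m : ℕ) (h : (Fin m → ℝ) → ℝ) : ℝ :=
  ((2 * Real.pi) ^ m)⁻¹ *
    ∫ θ in Set.Icc (0 : Fin m → ℝ) (fun _ => 2 * Real.pi), h θ

/-- The average `L²` distance `Δ(f,g)` over the parameter cube `[0, 2π]^m`. -/
noncomputable def Delta (m : ℕ) (f g : (Fin m → ℝ) → ℝ) : ℝ :=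
  Real.sqrt (cubeMean m fun θ => (f θ - g θ) ^ 2)

/-!
The monomials `Φ_ω`, `ω ∈ {-1,0,1}^m`, are orthogonal on `[0,2π]^m` with mean square
`2^{-|ω|}`: the mean of a product of one-variable functions factorises (Fubini), and in one
variable `1, cos, sin` are orthogonal on `[0,2π]` with mean squares `1, 1/2, 1/2`. Since `f - g`
is the tail of the expansion over `|ω| > ℓ`, Parseval's identity gives its mean square.
-/

open Real

lemma continuous_phi (w : ℤ) : Continuous (phi w) := by
  unfold phi; split_ifs <;> fun_prop

lemma continuous_Phi {m : ℕ} (ω : Fin m → ℤ) : Continuous (Phi ω) :=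
  continuous_finsetProd _ fun i _ => (continuous_phi (ω i)).comp (continuous_apply i)

theorem setIntegral_Icc_pi_prod {ι : Type*} [Fintype ι] (a b : ι → ℝ)
    (F : ι → ℝ → ℝ) :
    ∫ θ in Set.Icc a b, ∏ i, F i (θ i) =
      ∏ i, ∫ x in Set.Icc (a i) (b i), F i x := by
  rw [← Set.pi_univ_Icc, volume_pi, Measure.restrict_pi_pi, integral_fintype_prod_eq_prod]

lemma integral_phi_mul_phi {w w' : ℤ} (hw : w ∈ ({-1, 0, 1} : Finset ℤ))
    (hw' : w' ∈ ({-1, 0, 1} : Finset ℤ)) :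
    ∫ x in (0 : ℝ)..2 * π, phi w x * phi w' x =
      if w = w' then (if w = 0 then 2 * π else π) else 0 := by
  have hsin : ∫ x in (0 : ℝ)..2 * π, sin x = 0 := by simp
  have hcos : ∫ x in (0 : ℝ)..2 * π, cos x = 0 := by simp
  have hsin_sq : ∫ x in (0 : ℝ)..2 * π, sin x * sin x = π := by
    simp [← sq, integral_sin_sq]
  have hcos_sq : ∫ x in (0 : ℝ)..2 * π, cos x * cos x = π := by
    simp [← sq, integral_cos_sq]
  have hsin_cos : ∫ x in (0 : ℝ)..2 * π, sin x * cos x = 0 := by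
    simp [integral_sin_mul_cos₁]
  have hcos_sin : ∫ x in (0 : ℝ)..2 * π, cos x * sin x = 0 := by
    simpa only [mul_comm] using hsin_cos
  fin_cases hw <;> fin_cases hw' <;> simp [phi, *]

lemma cubeMean_phi_mul_phi {w w' : ℤ} (hw : w ∈ ({-1, 0, 1} : Finset ℤ))
    (hw' : w' ∈ ({-1, 0, 1} : Finset ℤ)) :
    (2 * π)⁻¹ * ∫ x in Set.Icc (0 : ℝ) (2 * π), phi w x * phi w' x =
      if w = w' then (if w = 0 then 1 else 2⁻¹) else 0 := by
  rw [integral_Icc_eq_integral_Ioc, ← intervalIntegral.integral_of_le (by positivity),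
    integral_phi_mul_phi hw hw']
  split_ifs <;> simp [field]

theorem cubeMean_Phi_mul_Phi {m : ℕ} {ω ω' : Fin m → ℤ} (hω : ω ∈ freqSet m)
    (hω' : ω' ∈ freqSet m) :
    cubeMean m (fun θ => Phi ω θ * Phi ω' θ) =
      if ω = ω' then ((2 : ℝ) ^ wt ω)⁻¹ else 0 := by
  simp only [freqSet, Fintype.mem_piFinset] at hω hω'
  simp only [cubeMean, Phi, ← prod_mul_distrib]
  have hpow : ((2 * π) ^ m)⁻¹ = ∏ _i : Fin m, (2 * π)⁻¹ := by
    rw [prod_const, card_univ, Fintype.card_fin, inv_pow]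
  rw [setIntegral_Icc_pi_prod _ _ fun i x => phi (ω i) x * phi (ω' i) x, hpow,
    ← prod_mul_distrib]
  simp only [Pi.zero_apply, cubeMean_phi_mul_phi (hω _) (hω' _)]
  split_ifs with h
  · subst h
    simp [prod_ite, wt]
  · obtain ⟨i, hi⟩ := Function.ne_iff.mp h
    exact prod_eq_zero (mem_univ i) (if_neg hi)

lemma cubeMean_sum {m : ℕ} {ι : Type*} (s : Finset ι) (h : ι → (Fin m → ℝ) → ℝ)
    (hh : ∀ a ∈ s, IntegrableOn (h a) (Set.Icc 0 fun _ => 2 * π)) :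
    cubeMean m (fun θ => ∑ a ∈ s, h a θ) = ∑ a ∈ s, cubeMean m (h a) := by
  simp only [cubeMean]
  rw [integral_finsetSum s hh, mul_sum]

lemma cubeMean_const_mul {m : ℕ} (c : ℝ) (h : (Fin m → ℝ) → ℝ) :
    cubeMean m (fun θ => c * h θ) = c * cubeMean m h := by
  simp only [cubeMean, integral_const_mul]
  ring

lemma Delta_sq (m : ℕ) (f g : (Fin m → ℝ) → ℝ) :
    Delta m f g ^ 2 = cubeMean m (fun θ => (f θ - g θ) ^ 2) :=
  sq_sqrt <| mul_nonneg (by positivity) <|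
    setIntegral_nonneg measurableSet_Icc fun _ _ => sq_nonneg _

theorem cubeMean_sum_mul_Phi_sq {m : ℕ} {s : Finset (Fin m → ℤ)} (hs : s ⊆ freqSet m)
    (c : (Fin m → ℤ) → ℝ) :
    cubeMean m (fun θ => (∑ ω ∈ s, c ω * Phi ω θ) ^ 2) =
      ∑ ω ∈ s, ((2 : ℝ) ^ wt ω)⁻¹ * c ω ^ 2 := by
  have hcont (ω ω' : Fin m → ℤ) :
      Continuous fun θ => c ω * c ω' * (Phi ω θ * Phi ω' θ) := by
    have := continuous_Phi ω
    have := continuous_Phi ω'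
    fun_prop
  simp_rw [sq, sum_mul_sum, mul_mul_mul_comm]
  rw [cubeMean_sum _ _ fun ω _ =>
    (continuous_finsetSum _ fun ω' _ => hcont ω ω').integrableOn_Icc]
  refine sum_congr rfl fun ω hω => ?_
  rw [cubeMean_sum _ _ fun ω' _ => (hcont ω ω').integrableOn_Icc]
  simp_rw [cubeMean_const_mul]
  rw [sum_congr rfl fun ω' hω' => by rw [cubeMean_Phi_mul_Phi (hs hω) (hs hω')]]
  simp only [mul_ite, mul_zero, sum_ite_eq, if_pos hω]
  ring

theorem stmt2 (m ℓ : ℕ) (d : (Fin m → ℤ) → ℝ) :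
    (Delta m (fun θ => ∑ ω ∈ freqSet m, d ω * Phi ω θ)
        (fun θ => ∑ ω ∈ (freqSet m).filter (fun ω => wt ω ≤ ℓ), d ω * Phi ω θ)) ^ 2 =
      ∑ ω ∈ (freqSet m).filter (fun ω => ℓ < wt ω), ((2 : ℝ) ^ wt ω)⁻¹ * d ω ^ 2 := by
  have htail : ∀ θ, (∑ ω ∈ freqSet m, d ω * Phi ω θ) -
      ∑ ω ∈ (freqSet m).filter (fun ω => wt ω ≤ ℓ), d ω * Phi ω θ =
      ∑ ω ∈ (freqSet m).filter (fun ω => ℓ < wt ω), d ω * Phi ω θ := fun θ => by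
    rw [sub_eq_iff_eq_add', ← sum_filter_add_sum_filter_not _ fun ω => wt ω ≤ ℓ]
    simp only [not_le]
  simp only [Delta_sq, htail]
  exact cubeMean_sum_mul_Phi_sq (filter_subset _ _) d
end

section
/- (Error bound of Theorem 2, layer-dependent noise.) Let m, ℓ ∈ ℕ and 0 ≤ q̄ ≤ 1. Suppose q : Fin m → ℝ satisfies 0 ≤ q_i ≤ q̄ for every i, and d, d⁰ : ({-1,0,1}^m) → ℝ satisfy |d_ω| ≤ (∏_i q_i^{|ω_i|})·|d⁰_ω| for every frequency vector ω (where |ω_i| ∈ {0,1} is the absolute value of the i-th entry), and Σ_ω 2^{-|ω|} (d⁰_ω)² ≤ 1. Define f(θ) = Σ_ω d_ω Φ_ω(θ) and g(θ) = Σ_{|ω| ≤ ℓ} d_ω Φ_ω(θ). Then Δ(f,g) ≤ q̄^{ℓ+1}. -/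
open MeasureTheory Finset

/-! The monomials `Φ_ω`, `ω ∈ {-1,0,1}^m`, are orthogonal on `[0, 2π]^m` with mean square
`2^{-|ω|}`, so by Parseval `Δ(f,g)² = ∑_{|ω| > ℓ} 2^{-|ω|} d_ω²`. For `|ω| > ℓ` the damping
factor `∏ q_i^{|ω_i|}` is at most `q̄^{|ω|} ≤ q̄^{ℓ+1}`, hence
`Δ(f,g)² ≤ q̄^{2(ℓ+1)} ∑ 2^{-|ω|} (d⁰_ω)² ≤ q̄^{2(ℓ+1)}`. -/

open Real

lemma integral_Icc_phi_mul_phi {w w' : ℤ} (hw : w ∈ ({-1, 0, 1} : Finset ℤ))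
    (hw' : w' ∈ ({-1, 0, 1} : Finset ℤ)) :
    ∫ x in Set.Icc 0 (2 * π), phi w x * phi w' x =
      if w = w' then 2 * π / 2 ^ w.natAbs else 0 := by
  rw [integral_Icc_eq_integral_Ioc, ← intervalIntegral.integral_of_le (by positivity)]
  fin_cases hw <;> fin_cases hw' <;>
    simp [phi, ← sq, integral_sin_sq, integral_cos_sq, integral_sin_mul_cos₁,
      mul_comm (cos _) (sin _)]

lemma setIntegral_Icc_prod {ι : Type*} [Fintype ι] (a b : ι → ℝ) (f : ι → ℝ → ℝ) :
    ∫ θ in Set.Icc a b, ∏ i, f i (θ i) = ∏ i, ∫ x in Set.Icc (a i) (b i), f i x := by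
  rw [← Set.pi_univ_Icc, volume_pi, Measure.restrict_pi_pi, integral_fintype_prod_eq_prod]

lemma sum_natAbs_eq_wt {m : ℕ} {ω : Fin m → ℤ} (hω : ω ∈ freqSet m) :
    ∑ i, (ω i).natAbs = wt ω := by
  have h01 : ∀ i, (ω i).natAbs = if ω i ≠ 0 then 1 else 0 := fun i => by
    rcases Finset.mem_insert.mp (Fintype.mem_piFinset.mp hω i) with h | h
    · simp [h]
    · rcases Finset.mem_insert.mp h with h | h <;> simp_all
  simp [h01, wt, card_filter]

lemma integral_Phi_mul_Phi {m : ℕ} {ω ω' : Fin m → ℤ} (hω : ω ∈ freqSet m)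
    (hω' : ω' ∈ freqSet m) :
    ∫ θ in Set.Icc (0 : Fin m → ℝ) (fun _ => 2 * π), Phi ω θ * Phi ω' θ =
      if ω = ω' then (2 * π) ^ m / 2 ^ wt ω else 0 := by
  simp only [Phi, ← prod_mul_distrib]
  rw [setIntegral_Icc_prod _ _ fun i x => phi (ω i) x * phi (ω' i) x]
  simp only [Pi.zero_apply]
  rw [prod_congr rfl fun i _ => integral_Icc_phi_mul_phi (Fintype.mem_piFinset.mp hω i)
    (Fintype.mem_piFinset.mp hω' i)]
  split_ifs with h
  · subst h
    simp [prod_div_distrib, prod_pow_eq_pow_sum, sum_natAbs_eq_wt hω]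
  · obtain ⟨i, hi⟩ := Function.ne_iff.mp h
    exact prod_eq_zero (mem_univ i) (if_neg hi)

lemma cubeMean_sq_sum_Phi {m : ℕ} {S : Finset (Fin m → ℤ)} (hS : S ⊆ freqSet m)
    (c : (Fin m → ℤ) → ℝ) :
    cubeMean m (fun θ => (∑ ω ∈ S, c ω * Phi ω θ) ^ 2) = ∑ ω ∈ S, c ω ^ 2 / 2 ^ wt ω := by
  have hint : ∀ ω ω' : Fin m → ℤ, IntegrableOn (fun θ => c ω * c ω' * (Phi ω θ * Phi ω' θ))
      (Set.Icc 0 fun _ => 2 * π) := fun ω ω' =>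
    (continuous_const.mul ((continuous_Phi ω).mul (continuous_Phi ω'))).continuousOn
      |>.integrableOn_compact isCompact_Icc
  have hexpand : (fun θ => (∑ ω ∈ S, c ω * Phi ω θ) ^ 2) =
      fun θ => ∑ ω ∈ S, ∑ ω' ∈ S, c ω * c ω' * (Phi ω θ * Phi ω' θ) := by
    funext θ
    rw [sq, sum_mul_sum]
    exact sum_congr rfl fun _ _ => sum_congr rfl fun _ _ => by ring
  rw [cubeMean, hexpand,
    integral_finsetSum _ fun ω _ => integrable_finsetSum _ fun ω' _ => hint ω ω', mul_sum]
  refine sum_congr rfl fun ω hω => ?_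
  rw [integral_finsetSum _ fun ω' _ => hint ω ω']
  simp only [integral_const_mul]
  rw [sum_congr rfl fun ω' hω' => by rw [integral_Phi_mul_Phi (hS hω) (hS hω')]]
  simp only [mul_ite, mul_zero, sum_ite_eq, if_pos hω]
  field_simp

lemma prod_pow_natAbs_le_pow_wt {m : ℕ} {ω : Fin m → ℤ} (hω : ω ∈ freqSet m) {q : Fin m → ℝ}
    {qbar : ℝ} (hq0 : ∀ i, 0 ≤ q i) (hq : ∀ i, q i ≤ qbar) :
    ∏ i, q i ^ (ω i).natAbs ≤ qbar ^ wt ω :=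
  calc ∏ i, q i ^ (ω i).natAbs ≤ ∏ i, qbar ^ (ω i).natAbs :=
        prod_le_prod (fun i _ => pow_nonneg (hq0 i) _)
          fun i _ => pow_le_pow_left₀ (hq0 i) (hq i) _
    _ = qbar ^ wt ω := by rw [prod_pow_eq_pow_sum, sum_natAbs_eq_wt hω]

lemma sum_sq_div_two_pow_wt_le {m ℓ : ℕ} {S : Finset (Fin m → ℤ)}
    (hS : ∀ ω ∈ S, ω ∈ freqSet m ∧ ℓ < wt ω) {q : Fin m → ℝ} {qbar : ℝ} (hqbar0 : 0 ≤ qbar)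
    (hqbar1 : qbar ≤ 1) (hq0 : ∀ i, 0 ≤ q i) (hq : ∀ i, q i ≤ qbar) {d d0 : (Fin m → ℤ) → ℝ}
    (hd : ∀ ω ∈ S, |d ω| ≤ (∏ i, q i ^ (ω i).natAbs) * |d0 ω|) :
    ∑ ω ∈ S, d ω ^ 2 / 2 ^ wt ω ≤ (qbar ^ (ℓ + 1)) ^ 2 * ∑ ω ∈ S, (2 ^ wt ω)⁻¹ * d0 ω ^ 2 := by
  rw [mul_sum]
  refine sum_le_sum fun ω hω => ?_
  obtain ⟨hω', hwt⟩ := hS ω hω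
  have hdamp : ∏ i, q i ^ (ω i).natAbs ≤ qbar ^ (ℓ + 1) :=
    (prod_pow_natAbs_le_pow_wt hω' hq0 hq).trans (pow_le_pow_of_le_one hqbar0 hqbar1 hwt)
  have hsq : d ω ^ 2 ≤ (qbar ^ (ℓ + 1)) ^ 2 * d0 ω ^ 2 := by
    rw [← sq_abs (d0 ω), ← mul_pow]
    exact sq_le_sq.mpr <| (hd ω hω).trans <|
      (mul_le_mul_of_nonneg_right hdamp (abs_nonneg _)).trans (le_abs_self _)
  calc d ω ^ 2 / 2 ^ wt ω ≤ (qbar ^ (ℓ + 1)) ^ 2 * d0 ω ^ 2 / 2 ^ wt ω := by gcongr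
    _ = (qbar ^ (ℓ + 1)) ^ 2 * ((2 ^ wt ω)⁻¹ * d0 ω ^ 2) := by ring

theorem stmt5 (m ℓ : ℕ) (qbar : ℝ) (hqbar0 : 0 ≤ qbar) (hqbar1 : qbar ≤ 1)
    (q : Fin m → ℝ) (hq0 : ∀ i, 0 ≤ q i) (hq : ∀ i, q i ≤ qbar)
    (d d0 : (Fin m → ℤ) → ℝ)
    (hd : ∀ ω ∈ freqSet m, |d ω| ≤ (∏ i, q i ^ (ω i).natAbs) * |d0 ω|)
    (hd0 : ∑ ω ∈ freqSet m, ((2 : ℝ) ^ wt ω)⁻¹ * d0 ω ^ 2 ≤ 1) :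
    Delta m (fun θ => ∑ ω ∈ freqSet m, d ω * Phi ω θ)
        (fun θ => ∑ ω ∈ (freqSet m).filter (fun ω => wt ω ≤ ℓ), d ω * Phi ω θ) ≤
      qbar ^ (ℓ + 1) := by
  set S := (freqSet m).filter fun ω => ¬wt ω ≤ ℓ
  have hS : ∀ ω ∈ S, ω ∈ freqSet m ∧ ℓ < wt ω := fun ω hω =>
    (mem_filter.mp hω).imp_right not_le.mp
  have hdiff : (fun θ => ((∑ ω ∈ freqSet m, d ω * Phi ω θ) -
      ∑ ω ∈ (freqSet m).filter (fun ω => wt ω ≤ ℓ), d ω * Phi ω θ) ^ 2) =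
      fun θ => (∑ ω ∈ S, d ω * Phi ω θ) ^ 2 := by
    funext θ
    rw [← sum_filter_add_sum_filter_not (freqSet m) fun ω => wt ω ≤ ℓ]
    ring
  have hd0S : ∑ ω ∈ S, ((2 : ℝ) ^ wt ω)⁻¹ * d0 ω ^ 2 ≤ 1 :=
    (sum_le_sum_of_subset_of_nonneg (filter_subset _ _) fun _ _ _ => by positivity).trans hd0
  rw [Delta, hdiff, cubeMean_sq_sum_Phi (filter_subset _ _), Real.sqrt_le_iff]
  refine ⟨by positivity, ?_⟩
  calc ∑ ω ∈ S, d ω ^ 2 / 2 ^ wt ω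
      ≤ (qbar ^ (ℓ + 1)) ^ 2 * ∑ ω ∈ S, (2 ^ wt ω)⁻¹ * d0 ω ^ 2 :=
        sum_sq_div_two_pow_wt_le hS hqbar0 hqbar1 hq0 hq fun ω hω => hd ω (hS ω hω).1
    _ ≤ (qbar ^ (ℓ + 1)) ^ 2 := mul_le_of_le_one_right (by positivity) hd0S
end
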